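/- Main indistinguishability lemma (combinatorial core): Let f : GF(2)^N → GF(2)^{r+m} be surjective with kernel C₀, and suppose every nonzero element of the dual code C₀^⊥ has Hamming weight at least dN. For x ∈ GF(2)^{r+m} let ρ_x be the uniform mixture of computational basis projectors over the coset f^{-1}(x), with matrix entries taken in the Hadamard-rotated basis {H^{⊗N}|α⟩}. If t < dN/2 and |φ⟩ lies in the span of {H^{⊗N}|α⟩ : d(α, ŵ) ≤ t} for some fixed ŵ ∈ {0,1}^N, then ⟨φ| ρ_x |φ⟩ = ⟨φ| ρ_{x'} |φ⟩ for all x, x' ∈ GF(2)^{r+m}. -/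

import Mathlib

open Matrix

/-- The GF(2) inner product `α ⊙ β = ⊕ᵢ αᵢ βᵢ`. -/
def dotp {N : ℕ} (α β : Fin N → ZMod 2) : ZMod 2 := ∑ i, α i * β i

/-- The sign `(-1)^z ∈ ℂ` attached to `z ∈ GF(2)`. -/
def sgn (z : ZMod 2) : ℂ := (-1 : ℂ) ^ z.val

/-- The Hadamard-rotated basis vector `|φ_α⟩ = H^{⊗N}|ψ_α⟩`. -/
noncomputable def hcol {N : ℕ} (α : Fin N → ZMod 2) : (Fin N → ZMod 2) → ℂ :=
  fun β => ((Real.sqrt 2 : ℂ))⁻¹ ^ N * sgn (dotp α β)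

/-- The uniform mixture of computational-basis projectors over `S ⊆ GF(2)^N`. -/
noncomputable def mix {N : ℕ} (S : Set (Fin N → ZMod 2)) :
    Matrix (Fin N → ZMod 2) (Fin N → ZMod 2) ℂ :=
  (Nat.card S : ℂ)⁻¹ • ∑ β ∈ (Set.toFinite S).toFinset, Matrix.single β β 1

/-! In the Hadamard-rotated basis, `⟨φ_α|ρ_x|φ_α'⟩ = 2^{-N} · avg_{β ∈ f⁻¹(x)} (-1)^{(α+α')⊙β}`.
Translating by some `δ ∈ C₀` with `γ ⊙ δ = 1` negates the character `β ↦ (-1)^{γ⊙β}` and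
preserves each coset of `C₀`, so the average vanishes unless `γ ∈ C₀^⊥`. Hence diagonal entries
are `2^{-N}` for every `x`, and an off-diagonal entry can be nonzero only if `α + α' ∈ C₀^⊥`.
When `α, α'` both lie within distance `t` of `ŵ`, the word `α + α'` has weight at most
`2t < dN`, so the distance hypothesis rules this out. Thus `ρ_x` and `ρ_{x'}` have the same
entries on the span of these vectors, and by sesquilinearity the same quadratic form there. -/

theorem sgn_add (a b : ZMod 2) : sgn (a + b) = sgn a * sgn b := by
  rw [sgn, sgn, sgn, ← pow_add, ZMod.val_add, ← neg_one_pow_eq_pow_mod_two]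

theorem sgn_zero : sgn 0 = 1 := by simp [sgn]

theorem sgn_one : sgn 1 = -1 := by simp [sgn, ZMod.val_one]

theorem star_sgn (a : ZMod 2) : star (sgn a) = sgn a := by
  simp [sgn]

theorem dotp_add_left {N : ℕ} (α α' β : Fin N → ZMod 2) :
    dotp (α + α') β = dotp α β + dotp α' β := by
  simp only [dotp, Pi.add_apply, add_mul, Finset.sum_add_distrib]

theorem dotp_add_right {N : ℕ} (γ β β' : Fin N → ZMod 2) :
    dotp γ (β + β') = dotp γ β + dotp γ β' := by
  simp only [dotp, Pi.add_apply, mul_add, Finset.sum_add_distrib]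

theorem dotp_zero_left {N : ℕ} (β : Fin N → ZMod 2) : dotp 0 β = 0 := by
  simp [dotp]

theorem hammingDist_add_zero {ι G : Type*} [Fintype ι] [AddCommGroup G] [Module (ZMod 2) G]
    [DecidableEq G] (x y : ι → G) : hammingDist (x + y) 0 = hammingDist x y := by
  rw [hammingDist_zero_right, hammingDist_eq_hammingNorm, ZModModule.neg_eq_self]

theorem star_hcol_mul_hcol {N : ℕ} (α α' β : Fin N → ZMod 2) :
    star (hcol α β) * hcol α' β = (2 ^ N)⁻¹ * sgn (dotp (α + α') β) := by
  have hsq : ((Real.sqrt 2 : ℂ))⁻¹ ^ N * ((Real.sqrt 2 : ℂ))⁻¹ ^ N = (2 ^ N)⁻¹ := by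
    rw [← mul_pow, ← mul_inv, ← Complex.ofReal_mul, Real.mul_self_sqrt zero_le_two]
    push_cast
    rw [inv_pow]
  simp only [hcol, star_mul', star_pow, star_inv₀, Complex.star_def, Complex.conj_ofReal,
    star_sgn, dotp_add_left, sgn_add]
  rw [← hsq]
  ring

theorem star_dotProduct_mix_mulVec {N : ℕ} (S : Set (Fin N → ZMod 2))
    (u v : (Fin N → ZMod 2) → ℂ) :
    star u ⬝ᵥ (mix S *ᵥ v)
      = (Nat.card S : ℂ)⁻¹ * ∑ β ∈ (Set.toFinite S).toFinset, star (u β) * v β := by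
  rw [mix, smul_mulVec, dotProduct_smul, smul_eq_mul, sum_mulVec, dotProduct_sum]
  congr 1
  refine Finset.sum_congr rfl fun β _ => ?_
  simp [single_mulVec, dotProduct, Function.update_apply]

theorem sum_sgn_dotp_coset_eq_zero {ι : Type*} {N : ℕ} (f : Matrix ι (Fin N) (ZMod 2))
    (x : ι → ZMod 2) {γ δ : Fin N → ZMod 2} (hδ : f *ᵥ δ = 0) (hγδ : dotp γ δ ≠ 0) :
    ∑ β ∈ (Set.toFinite {β | f *ᵥ β = x}).toFinset, sgn (dotp γ β) = 0 := by
  have hγδ_one : dotp γ δ = 1 := (by decide : ∀ z : ZMod 2, z ≠ 0 → z = 1) _ hγδ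
  refine Finset.sum_involution (fun β _ => β + δ) (fun β _ => ?_) (fun β _ _ => ?_)
    (fun β hβ => ?_) (fun β _ => ?_)
  · rw [dotp_add_right, hγδ_one, sgn_add, sgn_one]
    ring
  · rintro h
    rw [add_eq_left] at h
    simp [h, dotp] at hγδ
  · simp only [Set.Finite.mem_toFinset, Set.mem_ofPred_eq] at hβ ⊢
    rw [mulVec_add, hβ, hδ, add_zero]
  · rw [add_assoc, ZModModule.add_self, add_zero]

theorem star_hcol_dotProduct_mix_mulVec_hcol {N : ℕ} (S : Set (Fin N → ZMod 2))
    (α α' : Fin N → ZMod 2) :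
    star (hcol α) ⬝ᵥ (mix S *ᵥ hcol α')
      = (Nat.card S : ℂ)⁻¹ * (2 ^ N)⁻¹ *
          ∑ β ∈ (Set.toFinite S).toFinset, sgn (dotp (α + α') β) := by
  simp only [star_dotProduct_mix_mulVec, star_hcol_mul_hcol, ← Finset.mul_sum, mul_assoc]

theorem star_hcol_dotProduct_mix_mulVec_hcol_self {N : ℕ} {S : Set (Fin N → ZMod 2)}
    (hS : S.Nonempty) (α : Fin N → ZMod 2) :
    star (hcol α) ⬝ᵥ (mix S *ᵥ hcol α) = (2 ^ N)⁻¹ := by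
  have hcard : (Nat.card S : ℂ) ≠ 0 := by
    have := (Set.toFinite S).to_subtype
    have := hS.to_subtype
    exact_mod_cast Nat.card_pos.ne'
  rw [star_hcol_dotProduct_mix_mulVec_hcol, ZModModule.add_self]
  simp only [dotp_zero_left, sgn_zero, Finset.sum_const, nsmul_one, ← Set.ncard_eq_toFinset_card,
    Nat.card_coe_set_eq] at hcard ⊢
  field_simp

theorem star_hcol_dotProduct_mix_coset_mulVec_hcol_eq_zero {ι : Type*} {N : ℕ}
    (f : Matrix ι (Fin N) (ZMod 2)) (x : ι → ZMod 2) {α α' δ : Fin N → ZMod 2}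
    (hδ : f *ᵥ δ = 0) (hαα'δ : dotp (α + α') δ ≠ 0) :
    star (hcol α) ⬝ᵥ (mix {β | f *ᵥ β = x} *ᵥ hcol α') = 0 := by
  rw [star_hcol_dotProduct_mix_mulVec_hcol, sum_sgn_dotp_coset_eq_zero f x hδ hαα'δ, mul_zero]

theorem star_dotProduct_mulVec_eq_of_mem_span {R n : Type*} [CommSemiring R] [StarRing R]
    [Fintype n] {M M' : Matrix n n R} {G : Set (n → R)}
    (hG : ∀ u ∈ G, ∀ v ∈ G, star u ⬝ᵥ (M *ᵥ v) = star u ⬝ᵥ (M' *ᵥ v))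
    {u v : n → R} (hu : u ∈ Submodule.span R G) (hv : v ∈ Submodule.span R G) :
    star u ⬝ᵥ (M *ᵥ v) = star u ⬝ᵥ (M' *ᵥ v) := by
  induction hu using Submodule.span_induction generalizing v with
  | mem u hu =>
    induction hv using Submodule.span_induction with
    | mem v hv => exact hG u hu v hv
    | zero => simp
    | add v w _ _ ihv ihw => simp only [mulVec_add, dotProduct_add, ihv, ihw]
    | smul c v _ ihv => simp only [mulVec_smul, dotProduct_smul, ihv]
  | zero => simp
  | add u w _ _ ihu ihw => simp only [star_add, add_dotProduct, ihu hv, ihw hv]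
  | smul c u _ ihu => simp only [star_smul, smul_dotProduct, ihu hv]

theorem star_hcol_dotProduct_mix_coset_mulVec_hcol_eq {ι : Type*} {N dN t : ℕ}
    (f : Matrix ι (Fin N) (ZMod 2)) (hf : Function.Surjective f.mulVec)
    (hmin : ∀ γ : Fin N → ZMod 2,
      (∀ δ : Fin N → ZMod 2, f.mulVec δ = 0 → dotp γ δ = 0) → γ ≠ 0 →
        dN ≤ hammingDist γ 0)
    (ht : 2 * t < dN) {w0 α α' : Fin N → ZMod 2}
    (hα : hammingDist α w0 ≤ t) (hα' : hammingDist α' w0 ≤ t) (x x' : ι → ZMod 2) :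
    star (hcol α) ⬝ᵥ (mix {β | f *ᵥ β = x} *ᵥ hcol α')
      = star (hcol α) ⬝ᵥ (mix {β | f *ᵥ β = x'} *ᵥ hcol α') := by
  obtain rfl | hne := eq_or_ne α α'
  · rw [star_hcol_dotProduct_mix_mulVec_hcol_self (S := {β | f *ᵥ β = x}) (hf x),
      star_hcol_dotProduct_mix_mulVec_hcol_self (S := {β | f *ᵥ β = x'}) (hf x')]
  obtain ⟨δ, hδ, hαα'δ⟩ : ∃ δ, f *ᵥ δ = 0 ∧ dotp (α + α') δ ≠ 0 := by
    by_contra! hdual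
    have hne' : α + α' ≠ 0 := by rwa [← ZModModule.sub_eq_add, sub_ne_zero]
    have hfar := hmin _ hdual hne'
    rw [hammingDist_add_zero] at hfar
    have := hammingDist_triangle_right α α' w0
    omega
  rw [star_hcol_dotProduct_mix_coset_mulVec_hcol_eq_zero f x hδ hαα'δ,
    star_hcol_dotProduct_mix_coset_mulVec_hcol_eq_zero f x' hδ hαα'δ]

/-- Main indistinguishability lemma (combinatorial core): if every nonzero element of
the dual `C₀^⊥` of the kernel of the surjective map `f` has Hamming weight at least
`dN`, `t < dN/2`, and `|φ⟩` lies in the span of the Hadamard-rotated basis vectors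
`{H^{⊗N}|α⟩ : d(α,ŵ) ≤ t}`, then `⟨φ|ρ_x|φ⟩ = ⟨φ|ρ_{x'}|φ⟩` for all syndromes
`x, x'`, where `ρ_x` is the uniform mixture over the coset `f⁻¹(x)`. -/
theorem main_indistinguishability (r m N dN t : ℕ)
    (f : Matrix (Fin (r + m)) (Fin N) (ZMod 2)) (hf : Function.Surjective f.mulVec)
    (hmin : ∀ γ : Fin N → ZMod 2,
      (∀ δ : Fin N → ZMod 2, f.mulVec δ = 0 → dotp γ δ = 0) → γ ≠ 0 →
        dN ≤ hammingDist γ 0)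
    (ht : 2 * t < dN) (w0 : Fin N → ZMod 2) (φ : (Fin N → ZMod 2) → ℂ)
    (hφ : φ ∈ Submodule.span ℂ
      (hcol '' {α : Fin N → ZMod 2 | hammingDist α w0 ≤ t}))
    (x x' : Fin (r + m) → ZMod 2) :
    star φ ⬝ᵥ (mix {γ : Fin N → ZMod 2 | f.mulVec γ = x} *ᵥ φ)
      = star φ ⬝ᵥ (mix {γ : Fin N → ZMod 2 | f.mulVec γ = x'} *ᵥ φ) := by
  refine star_dotProduct_mulVec_eq_of_mem_span ?_ hφ hφ
  rintro _ ⟨α, hα, rfl⟩ _ ⟨α', hα', rfl⟩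
  exact star_hcol_dotProduct_mix_coset_mulVec_hcol_eq f hf hmin ht hα hα' x x'
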